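/- Let G be a graph, let H be an induced subgraph of G, and let v be a vertex of G with v ∉ V(H) and with degree at most 2 in G. Let L_1 and L_2 be list assignments for G with |L_1(v)| ≥ 5 and |L_2(v)| ≥ 5. Let φ_0 be a proper coloring of G and let δ be an (L_1,L_2)-trajectory in H starting with the restriction of φ_0 to V(H). If δ lifts to an (L_1,L_2)-trajectory in G−v starting with the restriction of φ_0 to V(G)∖{v}, then δ lifts to an (L_1,L_2)-trajectory in G starting with φ_0. -/

import Mathlib

/-- Applying a sequence of recolorings `(vertex, color)` to a coloring, one at a time. -/
def applySeq {V : Type*} [DecidableEq V] (φ : V → ℕ) (σ : List (V × ℕ)) : V → ℕ :=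
  σ.foldl (fun ψ p => Function.update ψ p.1 p.2) φ

/-- `φ` is a proper coloring of the subgraph of `G` induced on the vertex set `S`. -/
def ProperOn {V : Type*} (G : SimpleGraph V) (S : Finset V) (φ : V → ℕ) : Prop :=
  ∀ u ∈ S, ∀ v ∈ S, G.Adj u v → φ u ≠ φ v

/-- A sequence of recolorings is proper (on `G[S]`, starting from `φ`) if every
intermediate coloring is a proper coloring of `G[S]`. -/
def ProperSeqOn {V : Type*} [DecidableEq V] (G : SimpleGraph V) (S : Finset V)
    (φ : V → ℕ) (σ : List (V × ℕ)) : Prop :=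
  ∀ τ : List (V × ℕ), τ <+: σ → ProperOn G S (applySeq φ τ)

/-- A sequence of recolorings is once-only if each vertex is recolored at most once. -/
def OnceOnly {V : Type*} (σ : List (V × ℕ)) : Prop := (σ.map Prod.fst).Nodup

/-- All recolorings of `σ` happen at vertices of `S`. -/
def SeqIn {V : Type*} (S : Finset V) (σ : List (V × ℕ)) : Prop := ∀ p ∈ σ, p.1 ∈ S

/-- `(σ1, σ2)` is a witness that `(φ0, φ1, φ2)` is an `(L1, L2)`-trajectory in the
subgraph of `G` induced on `S`: `φ0` is a proper coloring of `G[S]`, and for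
`i ∈ {1,2}`, `φ i` is an `L i`-coloring of `G[S]` obtained from `φ (i-1)` by the
proper once-only sequence of recolorings `σ i`. -/
def WitnessOn {V : Type*} [DecidableEq V] (G : SimpleGraph V) (S : Finset V)
    (L1 L2 : V → Finset ℕ) (φ0 φ1 φ2 : V → ℕ) (σ1 σ2 : List (V × ℕ)) : Prop :=
  ProperOn G S φ0 ∧
  SeqIn S σ1 ∧ OnceOnly σ1 ∧ ProperSeqOn G S φ0 σ1 ∧ applySeq φ0 σ1 = φ1 ∧
    (∀ v ∈ S, φ1 v ∈ L1 v) ∧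
  SeqIn S σ2 ∧ OnceOnly σ2 ∧ ProperSeqOn G S φ1 σ2 ∧ applySeq φ1 σ2 = φ2 ∧
    (∀ v ∈ S, φ2 v ∈ L2 v)

/-- `(φ0, φ1, φ2)` is an `(L1, L2)`-trajectory in `G[S]` (starting with `φ0`). -/
def TrajectoryOn {V : Type*} [DecidableEq V] (G : SimpleGraph V) (S : Finset V)
    (L1 L2 : V → Finset ℕ) (φ0 φ1 φ2 : V → ℕ) : Prop :=
  ∃ σ1 σ2 : List (V × ℕ), WitnessOn G S L1 L2 φ0 φ1 φ2 σ1 σ2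

/-- `σ^T`: the subsequence of `σ` consisting of the recolorings of vertices of `T`. -/
def subSeq {V : Type*} [DecidableEq V] (T : Finset V) (σ : List (V × ℕ)) :
    List (V × ℕ) :=
  σ.filter (fun p => p.1 ∈ T)

/-- `σ` is `T`-late: the recolorings of vertices of `T` appear after all the other
recolorings, i.e. `σ = σ^{complement of T} ++ σ^T`. -/
def LateFor {V : Type*} [DecidableEq V] (T : Finset V) (σ : List (V × ℕ)) : Prop :=
  σ = σ.filter (fun p => p.1 ∉ T) ++ subSeq T σ

/-- `(σ1, σ2)` witnesses that the `(L1, L2)`-trajectory `(δ0, δ1, δ2)` in `G[T]` lifts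
to the `(L1, L2)`-trajectory `(φ0, φ1, φ2)` in `G[S]`: each `δ i` is the restriction of
`φ i` to `T`, and each `σ i` is a proper once-only `T`-late sequence of recolorings from
`φ (i-1)` to `φ i`. -/
def LiftWitness {V : Type*} [DecidableEq V] (G : SimpleGraph V) (S T : Finset V)
    (L1 L2 : V → Finset ℕ) (δ0 δ1 δ2 φ0 φ1 φ2 : V → ℕ)
    (σ1 σ2 : List (V × ℕ)) : Prop :=
  (∀ v ∈ T, φ0 v = δ0 v) ∧ (∀ v ∈ T, φ1 v = δ1 v) ∧ (∀ v ∈ T, φ2 v = δ2 v) ∧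
  WitnessOn G S L1 L2 φ0 φ1 φ2 σ1 σ2 ∧ LateFor T σ1 ∧ LateFor T σ2

/-- The `(L1, L2)`-trajectory `(δ0, δ1, δ2)` in `G[T]` lifts to the `(L1, L2)`-trajectory
`(φ0, φ1, φ2)` in `G[S]`. -/
def LiftsTo {V : Type*} [DecidableEq V] (G : SimpleGraph V) (S T : Finset V)
    (L1 L2 : V → Finset ℕ) (δ0 δ1 δ2 φ0 φ1 φ2 : V → ℕ) : Prop :=
  ∃ σ1 σ2 : List (V × ℕ), LiftWitness G S T L1 L2 δ0 δ1 δ2 φ0 φ1 φ2 σ1 σ2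

lemma applySeq_congr {V : Type*} [DecidableEq V] (σ : List (V × ℕ)) (φ ψ : V → ℕ) (u : V)
    (h : φ u = ψ u) : applySeq φ σ u = applySeq ψ σ u := by
  induction σ generalizing φ ψ with
  | nil => exact h
  | cons p σ ih =>
    simp only [applySeq, List.foldl_cons] at *
    exact ih _ _ (by by_cases hu : u = p.1 <;> simp [Function.update_apply, hu, h])

lemma applySeq_of_not_mem {V : Type*} [DecidableEq V] (σ : List (V × ℕ)) (φ : V → ℕ) (u : V)
    (h : ∀ p ∈ σ, p.1 ≠ u) : applySeq φ σ u = φ u := by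
  induction σ generalizing φ with
  | nil => rfl
  | cons p σ ih =>
    simp only [applySeq, List.foldl_cons] at *
    rw [ih _ (fun q hq => h q (List.mem_cons_of_mem _ hq))]
    simp [Function.update_apply, (h p List.mem_cons_self).symm]

lemma applySeq_mem {V : Type*} [DecidableEq V] (σ : List (V × ℕ)) (φ : V → ℕ) (u : V) :
    applySeq φ σ u = φ u ∨ (u, applySeq φ σ u) ∈ σ := by
  induction σ generalizing φ with
  | nil => left; rfl
  | cons p σ ih =>
    simp only [applySeq, List.foldl_cons] at *
    rcases ih (Function.update φ p.1 p.2) with h | h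
    · rw [h]
      by_cases hu : u = p.1
      · right
        subst hu
        simp [Function.update_self]
      · left
        simp [Function.update_apply, hu]
    · right; exact List.mem_cons_of_mem _ h

/-- One recoloring phase: we can prepend a suitable recoloring of `v` to a proper
once-only sequence `σ` avoiding `v`. -/
lemma phase_lemma {V : Type*} [DecidableEq V] [Fintype V] (G : SimpleGraph V)
    [DecidableRel G.Adj]
    (v : V) (hdeg : G.degree v ≤ 2) (L : Finset ℕ) (hL : 5 ≤ L.card)
    (φ ψ : V → ℕ) (σ : List (V × ℕ))
    (hagree : ∀ u, u ≠ v → φ u = ψ u)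
    (hφ : ProperOn G Finset.univ φ)
    (hin : SeqIn (Finset.univ.erase v) σ) (honce : OnceOnly σ)
    (hps : ProperSeqOn G (Finset.univ.erase v) ψ σ) :
    ∃ c ∈ L,
      SeqIn Finset.univ ((v, c) :: σ) ∧ OnceOnly ((v, c) :: σ) ∧
      ProperSeqOn G Finset.univ φ ((v, c) :: σ) ∧
      applySeq φ ((v, c) :: σ) v = c ∧
      (∀ u, u ≠ v → applySeq φ ((v, c) :: σ) u = applySeq ψ σ u) := by
  classical
  set N := G.neighborFinset v with hN
  have hvnot : ∀ p ∈ σ, p.1 ≠ v := fun p hp => (Finset.mem_erase.1 (hin p hp)).1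
  set A : Finset ℕ :=
    N.image ψ ∪ ((σ.filter (fun p => p.1 ∈ N)).map Prod.snd).toFinset with hA
  have hNcard : N.card ≤ 2 := hdeg
  -- bound the filtered list length
  have hfilt : ((σ.filter (fun p => p.1 ∈ N)).map Prod.snd).length ≤ 2 := by
    rw [List.length_map]
    set l : List V := (σ.filter (fun p => p.1 ∈ N)).map Prod.fst with hl
    have hsub : l.Sublist (σ.map Prod.fst) := (σ.filter_sublist).map Prod.fst
    have hnd : l.Nodup := hsub.nodup honce
    have hlen : (σ.filter (fun p => p.1 ∈ N)).length = l.length := by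
      simp [hl]
    rw [hlen]
    have : l.toFinset ⊆ N := by
      intro x hx
      simp only [hl, List.mem_toFinset, List.mem_map] at hx
      obtain ⟨p, hp, rfl⟩ := hx
      exact of_decide_eq_true (List.mem_filter.1 hp).2
    calc l.length = l.toFinset.card := (List.toFinset_card_of_nodup hnd).symm
      _ ≤ N.card := Finset.card_le_card this
      _ ≤ 2 := hNcard
  have hAcard : A.card ≤ 4 := by
    calc A.card ≤ (N.image ψ).card
          + ((σ.filter (fun p => p.1 ∈ N)).map Prod.snd).toFinset.card :=
        Finset.card_union_le _ _
      _ ≤ 2 + 2 := by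
        gcongr
        · exact le_trans (Finset.card_image_le) hNcard
        · exact le_trans (List.toFinset_card_le _) hfilt
      _ = 4 := rfl
  have hsd : (L \ A).Nonempty := by
    rw [← Finset.card_pos]
    have := Finset.le_card_sdiff A L
    omega
  obtain ⟨c, hc⟩ := hsd
  have hcL : c ∈ L := (Finset.mem_sdiff.1 hc).1
  have hcA : c ∉ A := (Finset.mem_sdiff.1 hc).2
  -- key: during the sequence, any neighbor of v has color in A
  have key : ∀ τ : List (V × ℕ), τ <+: σ → ∀ u ∈ N, applySeq ψ τ u ∈ A := by
    intro τ hτ u hu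
    rcases applySeq_mem τ ψ u with h | h
    · rw [h]
      exact Finset.mem_union_left _ (Finset.mem_image_of_mem ψ hu)
    · refine Finset.mem_union_right _ ?_
      rw [List.mem_toFinset, List.mem_map]
      exact ⟨(u, applySeq ψ τ u), List.mem_filter.2 ⟨hτ.sublist.mem h, by simpa using hu⟩, rfl⟩
  -- value computations for prefixes
  have hval : ∀ τ : List (V × ℕ), τ <+: σ →
      applySeq φ ((v, c) :: τ) v = c ∧
      ∀ u, u ≠ v → applySeq φ ((v, c) :: τ) u = applySeq ψ τ u := by
    intro τ hτ
    constructor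
    · show applySeq (Function.update φ v c) τ v = c
      rw [applySeq_of_not_mem τ _ v (fun p hp => hvnot p (hτ.sublist.mem hp))]
      simp
    · intro u hu
      show applySeq (Function.update φ v c) τ u = applySeq ψ τ u
      exact applySeq_congr τ _ _ u (by rw [Function.update_apply, if_neg hu]; exact hagree u hu)
  refine ⟨c, hcL, fun p _ => Finset.mem_univ _, ?_, ?_, (hval σ (List.prefix_refl σ)).1,
    (hval σ (List.prefix_refl σ)).2⟩
  · -- once only
    simp only [OnceOnly, List.map_cons, List.nodup_cons]
    refine ⟨?_, honce⟩
    intro hmem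
    obtain ⟨p, hp, hp2⟩ := List.mem_map.1 hmem
    exact hvnot p hp hp2
  · -- proper sequence
    intro τ' hτ'
    match τ', hτ' with
    | [], _ => exact hφ
    | q :: τ, hτ' =>
      obtain ⟨hq, hτ⟩ := List.cons_prefix_cons.1 hτ'
      subst hq
      obtain ⟨hv1, hv2⟩ := hval τ hτ
      intro a _ b _ hab
      by_cases ha : a = v
      · by_cases hb : b = v
        · exact absurd (ha ▸ hb ▸ hab) (G.irrefl)
        · rw [ha, hv1, hv2 b hb]
          intro hEq
          exact hcA (hEq ▸ key τ hτ b (by rw [SimpleGraph.mem_neighborFinset, ← ha]; exact hab))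
      · by_cases hb : b = v
        · rw [hb, hv1, hv2 a ha]
          intro hEq
          exact hcA (hEq ▸ key τ hτ a
            (by rw [SimpleGraph.mem_neighborFinset, ← hb]; exact (hab.symm)))
        · rw [hv2 a ha, hv2 b hb]
          exact hps τ hτ a (Finset.mem_erase.2 ⟨ha, Finset.mem_univ _⟩)
            b (Finset.mem_erase.2 ⟨hb, Finset.mem_univ _⟩) hab

/-- (Degree-two vertex deletion, from Lemma 8): Let `H = G[T]` be an induced subgraph
of `G` and let `v ∉ T` be a vertex of degree at most `2` in `G`.  Let `L1`, `L2` be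
list assignments for `G` with `|L1(v)| ≥ 5` and `|L2(v)| ≥ 5`.  Let `φ0` be a proper
coloring of `G` and `(δ0, δ1, δ2)` an `(L1, L2)`-trajectory in `H` starting with the
restriction of `φ0`.  If `(δ0, δ1, δ2)` lifts to an `(L1, L2)`-trajectory in `G - v`
starting with the restriction of `φ0`, then `(δ0, δ1, δ2)` lifts to an
`(L1, L2)`-trajectory in `G` starting with `φ0`. -/
theorem lifts_of_deleteVertex {V : Type*} [DecidableEq V] [Fintype V]
    (G : SimpleGraph V) [DecidableRel G.Adj]
    (T : Finset V) (v : V) (hv : v ∉ T) (hdeg : G.degree v ≤ 2)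
    (L1 L2 : V → Finset ℕ) (hL1 : 5 ≤ (L1 v).card) (hL2 : 5 ≤ (L2 v).card)
    (φ0 : V → ℕ) (hφ0 : ProperOn G Finset.univ φ0)
    (δ0 δ1 δ2 : V → ℕ) (hstart : ∀ u ∈ T, δ0 u = φ0 u)
    (hδ : TrajectoryOn G T L1 L2 δ0 δ1 δ2)
    (hlift : ∃ ψ0 ψ1 ψ2 : V → ℕ, (∀ u ∈ Finset.univ.erase v, ψ0 u = φ0 u) ∧
      LiftsTo G (Finset.univ.erase v) T L1 L2 δ0 δ1 δ2 ψ0 ψ1 ψ2) :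
    ∃ φ1 φ2 : V → ℕ, LiftsTo G Finset.univ T L1 L2 δ0 δ1 δ2 φ0 φ1 φ2 := by
  classical
  obtain ⟨ψ0, ψ1, ψ2, hψ0, σ1, σ2, hδ0, hδ1, hδ2, hW, hlate1, hlate2⟩ := hlift
  obtain ⟨hP0, hin1, ho1, hps1, happ1, hcol1, hin2, ho2, hps2, happ2, hcol2⟩ := hW
  have hagree0 : ∀ u, u ≠ v → φ0 u = ψ0 u := fun u hu =>
    (hψ0 u (Finset.mem_erase.2 ⟨hu, Finset.mem_univ _⟩)).symm
  obtain ⟨c1, hc1L, hin1', ho1', hps1', hval1v, hval1⟩ :=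
    phase_lemma G v hdeg (L1 v) hL1 φ0 ψ0 σ1 hagree0 hφ0 hin1 ho1 hps1
  set φ1 : V → ℕ := applySeq φ0 ((v, c1) :: σ1) with hφ1
  have hφ1proper : ProperOn G Finset.univ φ1 := hps1' _ (List.prefix_refl _)
  have hagree1 : ∀ u, u ≠ v → φ1 u = ψ1 u := fun u hu =>
    (hval1 u hu).trans (congrFun happ1 u)
  obtain ⟨c2, hc2L, hin2', ho2', hps2', hval2v, hval2⟩ :=
    phase_lemma G v hdeg (L2 v) hL2 φ1 ψ1 σ2 hagree1 hφ1proper hin2 ho2 hps2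
  set φ2 : V → ℕ := applySeq φ1 ((v, c2) :: σ2) with hφ2
  have hagree2 : ∀ u, u ≠ v → φ2 u = ψ2 u := fun u hu =>
    (hval2 u hu).trans (congrFun happ2 u)
  have hvT : ∀ u ∈ T, u ≠ v := fun u hu h => hv (h ▸ hu)
  refine ⟨φ1, φ2, (v, c1) :: σ1, (v, c2) :: σ2,
    fun u hu => (hstart u hu).symm,
    fun u hu => (hagree1 u (hvT u hu)).trans (hδ1 u hu),
    fun u hu => (hagree2 u (hvT u hu)).trans (hδ2 u hu),
    ⟨hφ0, hin1', ho1', hps1', rfl, ?_, hin2', ho2', hps2', rfl, ?_⟩, ?_, ?_⟩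
  · intro u _
    by_cases hu : u = v
    · subst hu
      show φ1 u ∈ L1 u
      rw [hval1v]; exact hc1L
    · rw [hagree1 u hu]
      exact hcol1 u (Finset.mem_erase.2 ⟨hu, Finset.mem_univ _⟩)
  · intro u _
    by_cases hu : u = v
    · subst hu
      show φ2 u ∈ L2 u
      rw [hval2v]; exact hc2L
    · rw [hagree2 u hu]
      exact hcol2 u (Finset.mem_erase.2 ⟨hu, Finset.mem_univ _⟩)
  · -- LateFor T ((v, c1) :: σ1)
    show ((v, c1) :: σ1) = _ ++ _
    have h1 : ((v, c1) :: σ1).filter (fun p => p.1 ∉ T) =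
        (v, c1) :: σ1.filter (fun p => p.1 ∉ T) := by
      rw [List.filter_cons]
      simp [hv]
    have h2 : subSeq T ((v, c1) :: σ1) = subSeq T σ1 := by
      unfold subSeq
      rw [List.filter_cons]
      simp [hv]
    rw [h1, h2, List.cons_append]
    exact congrArg _ hlate1
  · show ((v, c2) :: σ2) = _ ++ _
    have h1 : ((v, c2) :: σ2).filter (fun p => p.1 ∉ T) =
        (v, c2) :: σ2.filter (fun p => p.1 ∉ T) := by
      rw [List.filter_cons]
      simp [hv]
    have h2 : subSeq T ((v, c2) :: σ2) = subSeq T σ2 := by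
      unfold subSeq
      rw [List.filter_cons]
      simp [hv]
    rw [h1, h2, List.cons_append]
    exact congrArg _ hlate2
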